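/- arXiv:2501.13596 — 9 statements merged into one kernel-verified Lean document; each statement's English description precedes it below -/
import Mathlib

section
/- Let G = (V,E) be an undirected graph on n vertices, let K ⊆ F ⊆ V with |F| ≤ f < n/2. Let A_K be the vertex set of a largest connected component of G - K, and let B_K = V \ (K ∪ A_K). If either (i) |A_K| < n - |F|, or (ii) |A_K| ≥ n - |F| and B_K is not contained in F, then F is a vertex cut in G (i.e., G - F is disconnected). -/
open SimpleGraph

/-- `F` is a vertex cut in `G`: two vertices outside `F` are disconnected in `G - F`. -/
def SimpleGraph.IsVertexCut {α : Type*} (G : SimpleGraph α) (F : Set α) : Prop :=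
  ∃ s t : ↥Fᶜ, ¬ (G.induce Fᶜ).Reachable s t

/-!
Since `K ⊆ F`, every component of `G - F` lies inside a single component of `G - K`. If `G - F`
were connected, all `n - |F|` of its vertices would lie in one component of `G - K`, which has at
most `|A_K|` vertices, contradicting (i). In case (ii), `|F| ≤ f < n/2 ≤ |A_K|` yields a vertex of
`A_K` outside `F`; with a vertex of `B_K` outside `F` it gives two vertices of `G - F` in different
components of `G - K`, hence in different components of `G - F`.
-/

namespace SimpleGraph

variable {V : Type*} (G : SimpleGraph V)

theorem subset_supp_of_forall_reachable_induce {S T : Set V} (hST : S ⊆ T)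
    (hS : ∀ s t : S, (G.induce S).Reachable s t) {x : V} (hx : x ∈ S) :
    S ⊆ Subtype.val '' ((G.induce T).connectedComponentMk ⟨x, hST hx⟩).supp := by
  intro y hy
  refine ⟨⟨y, hST hy⟩, ?_, rfl⟩
  rw [ConnectedComponent.mem_supp_iff]
  exact ConnectedComponent.sound ((hS ⟨y, hy⟩ ⟨x, hx⟩).map (G.induceHomOfLE hST).toHom)

theorem isVertexCut_of_supp_not_subset {K F : Set V} (hKF : K ⊆ F)
    (c : (G.induce Kᶜ).ConnectedComponent)
    (hin : ¬ Subtype.val '' c.supp ⊆ F) (hout : ¬ Kᶜ \ Subtype.val '' c.supp ⊆ F) :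
    G.IsVertexCut F := by
  have hFK : Fᶜ ⊆ Kᶜ := Set.compl_subset_compl.mpr hKF
  obtain ⟨_, ⟨a, ha, rfl⟩, haF⟩ := Set.not_subset.mp hin
  obtain ⟨b, ⟨hbK, hbc⟩, hbF⟩ := Set.not_subset.mp hout
  refine ⟨⟨a, haF⟩, ⟨b, hbF⟩, fun hab => hbc ⟨⟨b, hbK⟩, ?_, rfl⟩⟩
  rw [ConnectedComponent.mem_supp_iff] at ha ⊢
  rw [← ha]
  exact ConnectedComponent.sound (hab.map (G.induceHomOfLE hFK).toHom).symm

end SimpleGraph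

/-- If `A` is (the vertex set of) a largest connected component of `G - K`, `B` is the union
of all other components, `K ⊆ F`, `|F| ≤ f < n/2`, and either (i) `|A| < n - |F|`, or
(ii) `|A| ≥ n - |F|` and `B ⊄ F`, then `F` is a vertex cut in `G`. -/
theorem stmt1 {V : Type*} [Fintype V] (G : SimpleGraph V) (f : ℕ)
    (K F : Set V) (hKF : K ⊆ F) (hFf : F.ncard ≤ f) (hfn : 2 * f < Fintype.card V)
    (c : (G.induce Kᶜ).ConnectedComponent)
    (A : Set V) (hA : A = Subtype.val '' c.supp)
    (hmax : ∀ c' : (G.induce Kᶜ).ConnectedComponent, c'.supp.ncard ≤ c.supp.ncard)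
    (B : Set V) (hB : B = Kᶜ \ A)
    (h : A.ncard < Fintype.card V - F.ncard ∨
        (Fintype.card V - F.ncard ≤ A.ncard ∧ ¬ B ⊆ F)) :
    G.IsVertexCut F := by
  subst hA hB
  have hF : F.ncard + Fᶜ.ncard = Fintype.card V := by
    rw [← Nat.card_eq_fintype_card]
    exact Set.ncard_add_ncard_compl F
  rw [Set.ncard_image_of_injective _ Subtype.val_injective] at h
  rcases h with hsmall | ⟨hlarge, hB⟩
  · obtain ⟨x, hx⟩ : Fᶜ.Nonempty := Set.nonempty_of_ncard_ne_zero (by omega)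
    by_contra hcut
    have hsub := G.subset_supp_of_forall_reachable_induce (Set.compl_subset_compl.mpr hKF)
      (by simpa [IsVertexCut] using hcut) hx
    have hcard := Set.ncard_le_ncard hsub
    rw [Set.ncard_image_of_injective _ Subtype.val_injective] at hcard
    have hcomp := hcard.trans (hmax _)
    omega
  · refine G.isVertexCut_of_supp_not_subset hKF c (fun hAF => ?_) hB
    have hcard := Set.ncard_le_ncard hAF
    rw [Set.ncard_image_of_injective _ Subtype.val_injective] at hcard
    omega
end

section
/- Let G = (V,E) be a connected undirected graph and S ⊆ V. Then for every F ⊆ V, F is a vertex cut in G if and only if at least one of the following holds: (1) F separates S in G (i.e., two vertices of S \ F lie in different components of G - F); (2) S ⊆ F and G - (S ∪ F) is disconnected; (3) S is not contained in F and G - (S ∪ F) has a connected component C whose neighborhood N(C) in G satisfies N(C) ⊆ F. -/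
open SimpleGraph

/-- `F` separates `X` in `G`: two vertices of `X \ F` are disconnected in `G - F`. -/
def SimpleGraph.SepSet {α : Type*} (G : SimpleGraph α) (F X : Set α) : Prop :=
  ∃ s t : ↥Fᶜ, (s : α) ∈ X ∧ (t : α) ∈ X ∧ ¬ (G.induce Fᶜ).Reachable s t

/-- The neighborhood of a set `X`: vertices outside `X` with a neighbor in `X`. -/
def SimpleGraph.nbhd {α : Type*} (G : SimpleGraph α) (X : Set α) : Set α :=
  {v | v ∉ X ∧ ∃ u ∈ X, G.Adj v u}

/-!
A vertex set whose neighbourhood lies in `F` is closed under reachability in `G - F`; hence a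
component `C` of `G - (S ∪ F)` with `N(C) ⊆ F` is cut off from every vertex of `S \ F`.
Conversely, if `F` cuts `G` without separating `S`, then `S \ F` lies in one component of `G - F`,
some vertex `t` lies outside that component, and the component of `t` in `G - (S ∪ F)` has all its
neighbours in `S ∪ F`, none of them in `S \ F`.
-/

namespace SimpleGraph

variable {V : Type*} {G : SimpleGraph V}

theorem nbhd_image_supp_subset_compl {A : Set V} (c : (G.induce A).ConnectedComponent) :
    G.nbhd (Subtype.val '' c.supp) ⊆ Aᶜ := by
  rintro v ⟨hvc, _, ⟨u, hu, rfl⟩, hvu⟩ hvA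
  refine hvc ⟨⟨v, hvA⟩, ?_, rfl⟩
  rw [ConnectedComponent.mem_supp_iff] at hu ⊢
  rw [← hu]
  exact ConnectedComponent.connectedComponentMk_eq_of_adj
    (show (G.induce A).Adj ⟨v, hvA⟩ u from hvu)

theorem mem_of_reachable_of_nbhd_subset {X F : Set V} (hX : G.nbhd X ⊆ F) {x y : ↥Fᶜ}
    (h : (G.induce Fᶜ).Reachable x y) (hx : ↑x ∈ X) : ↑y ∈ X := by
  obtain ⟨p⟩ := h
  induction p with
  | nil => exact hx
  | @cons a b _ hab _ ih => exact ih (by_contra fun hb => b.2 (hX ⟨hb, a, hx, hab.symm⟩))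

theorem isVertexCut_of_nbhd_component_subset {S F : Set V} (hSF : ¬ S ⊆ F)
    (c : (G.induce (S ∪ F)ᶜ).ConnectedComponent) (hc : G.nbhd (Subtype.val '' c.supp) ⊆ F) :
    G.IsVertexCut F := by
  obtain ⟨s, hsS, hsF⟩ := Set.not_subset.mp hSF
  obtain ⟨t, rfl⟩ := c.exists_rep
  refine ⟨⟨t, Set.compl_subset_compl.mpr Set.subset_union_right t.2⟩, ⟨s, hsF⟩, fun h => ?_⟩
  obtain ⟨s', -, hs's⟩ := mem_of_reachable_of_nbhd_subset hc h ⟨t, rfl, rfl⟩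
  exact s'.2 (hs's ▸ Or.inl hsS)

theorem exists_nbhd_component_subset {S F : Set V} (hcut : G.IsVertexCut F)
    (hsep : ¬ G.SepSet F S) (hSF : ¬ S ⊆ F) :
    ∃ c : (G.induce (S ∪ F)ᶜ).ConnectedComponent, G.nbhd (Subtype.val '' c.supp) ⊆ F := by
  obtain ⟨s, hsS, hsF⟩ := Set.not_subset.mp hSF
  have hS : ∀ x y : ↥Fᶜ, ↑x ∈ S → ↑y ∈ S → (G.induce Fᶜ).Reachable x y :=
    fun x y hx hy => by_contra fun h => hsep ⟨x, y, hx, hy, h⟩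
  obtain ⟨t, hst⟩ : ∃ t, ¬ (G.induce Fᶜ).Reachable ⟨s, hsF⟩ t := by
    obtain ⟨x, y, hxy⟩ := hcut
    by_contra! h
    exact hxy ((h x).symm.trans (h y))
  have htS : ↑t ∉ S := fun htS => hst (hS _ _ hsS htS)
  have hmono : (S ∪ F)ᶜ ⊆ Fᶜ := Set.compl_subset_compl.mpr Set.subset_union_right
  refine ⟨(G.induce (S ∪ F)ᶜ).connectedComponentMk ⟨t, fun h => h.elim htS t.2⟩, fun v hv => ?_⟩
  by_contra hvF
  have hvS : v ∈ S := by simpa [hvF] using nbhd_image_supp_subset_compl _ hv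
  obtain ⟨-, _, ⟨u, hu, rfl⟩, hvu⟩ := hv
  have hut : (G.induce Fᶜ).Reachable ⟨u, hmono u.2⟩ t :=
    (ConnectedComponent.exact hu).map (G.induceHomOfLE hmono).toHom
  have hvu' : (G.induce Fᶜ).Adj ⟨v, hvF⟩ ⟨u, hmono u.2⟩ := hvu
  exact hst ((hS ⟨s, hsF⟩ ⟨v, hvF⟩ hsS hvS).trans (hvu'.reachable.trans hut))

end SimpleGraph

theorem stmt2_general {V : Type*} (G : SimpleGraph V)
    (S F : Set V) :
    G.IsVertexCut F ↔
      (G.SepSet F S ∨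
        (S ⊆ F ∧ G.IsVertexCut (S ∪ F)) ∨
        (¬ S ⊆ F ∧ ∃ c : (G.induce (S ∪ F)ᶜ).ConnectedComponent,
            G.nbhd (Subtype.val '' c.supp) ⊆ F)) := by
  refine ⟨fun hcut => ?_, ?_⟩
  · by_cases hsep : G.SepSet F S
    · exact Or.inl hsep
    by_cases hSF : S ⊆ F
    · exact Or.inr <| Or.inl ⟨hSF, by rwa [Set.union_eq_self_of_subset_left hSF]⟩
    · exact Or.inr <| Or.inr ⟨hSF, exists_nbhd_component_subset hcut hsep hSF⟩
  · rintro (⟨s, t, -, -, hst⟩ | ⟨hSF, hcut⟩ | ⟨hSF, c, hc⟩)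
    · exact ⟨s, t, hst⟩
    · rwa [Set.union_eq_self_of_subset_left hSF] at hcut
    · exact isVertexCut_of_nbhd_component_subset hSF c hc

/-- For a connected graph `G` and `S ⊆ V`: `F` is a vertex cut iff (1) `F` separates `S`,
or (2) `S ⊆ F` and `G - (S ∪ F)` is disconnected, or (3) `S ⊄ F` and `G - (S ∪ F)` has a
connected component `C` with `N(C) ⊆ F`. -/
theorem stmt2 {V : Type*} [Fintype V] (G : SimpleGraph V) (hG : G.Connected)
    (S F : Set V) :
    G.IsVertexCut F ↔
      (G.SepSet F S ∨
        (S ⊆ F ∧ G.IsVertexCut (S ∪ F)) ∨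
        (¬ S ⊆ F ∧ ∃ c : (G.induce (S ∪ F)ᶜ).ConnectedComponent,
            G.nbhd (Subtype.val '' c.supp) ⊆ F)) :=
  stmt2_general G S F
end

section
/- Let G be an undirected graph with a vertex cut (L,S,R) (partition of V with L,R nonempty and no edges between L and R). Let G_L be the f-left graph: delete R \ U_R where U_R ⊆ R with |U_R| = min(f+1, |R|), add all edges within U_R and all edges between U_R and S. If F ⊆ V(G_L) with |F| ≤ f separates two vertices x,y in G_L, then F separates x and y in G. -/
open SimpleGraph

/-- `F` separates the vertices `x` and `y` in `G`: `x, y ∉ F` and `x, y` are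
disconnected in `G - F`. -/
def SimpleGraph.SepPair {α : Type*} (G : SimpleGraph α) (F : Set α) (x y : α) : Prop :=
  ∃ (hx : x ∈ Fᶜ) (hy : y ∈ Fᶜ), ¬ (G.induce Fᶜ).Reachable ⟨x, hx⟩ ⟨y, hy⟩

/-- The "`f`-left graph" on the vertex set `W` (intended: `W = L ∪ S ∪ U_R`):
all edges of `G` inside `W`, plus a clique on `U_R` and a biclique between `U_R` and `S`. -/
def leftGraph {α : Type*} (G : SimpleGraph α) (S UR W : Set α) : SimpleGraph ↥W where
  Adj a b := a ≠ b ∧ (G.Adj (a : α) (b : α) ∨ ((a : α) ∈ UR ∧ (b : α) ∈ UR) ∨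
      ((a : α) ∈ UR ∧ (b : α) ∈ S) ∨ ((a : α) ∈ S ∧ (b : α) ∈ UR))
  symm := by
    constructor
    rintro a b ⟨hne, h⟩
    refine ⟨hne.symm, ?_⟩
    rcases h with h | ⟨h1, h2⟩ | ⟨h1, h2⟩ | ⟨h1, h2⟩
    · exact Or.inl h.symm
    · exact Or.inr (Or.inl ⟨h2, h1⟩)
    · exact Or.inr (Or.inr (Or.inr ⟨h2, h1⟩))
    · exact Or.inr (Or.inr (Or.inl ⟨h2, h1⟩))
  loopless := by constructor; rintro a ⟨hne, -⟩; exact hne rfl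

/-!
Suppose `x` and `y` are joined by a walk in `G - F`. Keep the vertices of that walk that lie in
`W = L ∪ S ∪ U_R` and send every vertex of `R \ U_R` to one fixed vertex `u ∈ U_R \ F`; such a `u`
exists because, when `R \ U_R` is nonempty, `|U_R| = f + 1 > |F|`. A vertex of `W` with a
neighbour in `R \ U_R` lies in `S ∪ U_R`, hence is adjacent to `u` in `G_L`, so the image is a walk
from `x` to `y` in `G_L - F`.
-/

namespace SimpleGraph

variable {V : Type*} {G : SimpleGraph V}

theorem Reachable.lift {W : Type*} {H : SimpleGraph W} (φ : V → W)
    (h : ∀ a b, G.Adj a b → H.Reachable (φ a) (φ b))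
    {a b : V} (hab : G.Reachable a b) : H.Reachable (φ a) (φ b) := by
  rw [reachable_iff_reflTransGen] at hab ⊢
  exact hab.lift' φ fun a b hadj => (reachable_iff_reflTransGen _ _).mp (h a b hadj)

theorem reachable_induce_of_hub {W F : Set V} {H : SimpleGraph W}
    (hGH : ∀ a b : W, G.Adj a b → H.Adj a b) (u : W) (huF : (u : V) ∉ F)
    (hhub : ∀ (a : W) (b : V), b ∉ W → G.Adj a b → a ≠ u → H.Adj a u)
    {x y : W} (hx : (x : V) ∈ Fᶜ) (hy : (y : V) ∈ Fᶜ)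
    (hxy : (G.induce Fᶜ).Reachable ⟨x, hx⟩ ⟨y, hy⟩) :
    (H.induce {a : W | (a : V) ∈ F}ᶜ).Reachable ⟨x, hx⟩ ⟨y, hy⟩ := by
  classical
  set H' := H.induce {a : W | (a : V) ∈ F}ᶜ
  let φ : ↥Fᶜ → ↥{a : W | (a : V) ∈ F}ᶜ := fun v =>
    if hv : (v : V) ∈ W then ⟨⟨v, hv⟩, v.2⟩ else ⟨u, huF⟩
  have hφ : ∀ (v : ↥Fᶜ) (hv : (v : V) ∈ W), φ v = ⟨⟨v, hv⟩, v.2⟩ := fun v hv => dif_pos hv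
  have hφu : ∀ v : ↥Fᶜ, (v : V) ∉ W → φ v = ⟨u, huF⟩ := fun v hv => dif_neg hv
  have to_u : ∀ (a b : ↥Fᶜ) (ha : (a : V) ∈ W), (b : V) ∉ W → G.Adj a b →
      H'.Reachable ⟨⟨a, ha⟩, a.2⟩ ⟨u, huF⟩ := by
    intro a b ha hb hab
    by_cases hau : (⟨a, ha⟩ : W) = u
    · subst hau; rfl
    · exact Adj.reachable (G := H') (hhub _ _ hb hab hau)
  have step : ∀ a b, (G.induce Fᶜ).Adj a b → H'.Reachable (φ a) (φ b) := by
    intro a b hab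
    by_cases ha : (a : V) ∈ W <;> by_cases hb : (b : V) ∈ W
    · rw [hφ a ha, hφ b hb]
      exact Adj.reachable (G := H') (hGH ⟨a, ha⟩ ⟨b, hb⟩ hab)
    · rw [hφ a ha, hφu b hb]
      exact to_u a b ha hb hab
    · rw [hφu a ha, hφ b hb]
      exact (to_u b a hb ha hab.symm).symm
    · rw [hφu a ha, hφu b hb]
  simpa only [hφ ⟨x, hx⟩ x.2, hφ ⟨y, hy⟩ y.2] using hxy.lift φ step

end SimpleGraph

theorem Set.nonempty_sdiff_of_ncard_eq_min {α : Type*} [Finite α] {R U F : Set α} {f : ℕ}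
    (hUR : U ⊆ R) (hU : U.ncard = min (f + 1) R.ncard) (hF : F.ncard ≤ f)
    (hRU : (R \ U).Nonempty) : (U \ F).Nonempty := by
  have hlt : U.ncard < R.ncard :=
    Set.ncard_lt_ncard ((Set.ssubset_iff_of_subset hUR).mpr hRU)
  exact Set.sdiff_nonempty_of_ncard_lt_ncard (by omega)

section leftGraph

variable {V : Type*} {G : SimpleGraph V} {S UR W : Set V}

theorem leftGraph_adj_of_adj {a b : W} (h : G.Adj a b) : (leftGraph G S UR W).Adj a b :=
  ⟨fun hab => h.ne (congrArg Subtype.val hab), Or.inl h⟩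

theorem leftGraph_adj_of_mem {a u : W} (hne : a ≠ u) (ha : (a : V) ∈ S ∪ UR)
    (hu : (u : V) ∈ UR) : (leftGraph G S UR W).Adj a u := by
  refine ⟨hne, Or.inr ?_⟩
  rcases ha with ha | ha
  · exact Or.inr (Or.inr ⟨ha, hu⟩)
  · exact Or.inl ⟨ha, hu⟩

end leftGraph

theorem stmt3_general {V : Type*} [Fintype V] (G : SimpleGraph V) (f : ℕ)
    (L S R : Set V)
    (hUnion : L ∪ S ∪ R = Set.univ)
    (hnoedge : ∀ a ∈ L, ∀ b ∈ R, ¬ G.Adj a b)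
    (UR : Set V) (hURsub : UR ⊆ R) (hURcard : UR.ncard = min (f + 1) R.ncard)
    (F : Set V) (hFcard : F.ncard ≤ f)
    (x y : ↥(L ∪ S ∪ UR))
    (hsep : (leftGraph G S UR (L ∪ S ∪ UR)).SepPair
      {a : ↥(L ∪ S ∪ UR) | (a : V) ∈ F} x y) :
    G.SepPair F (x : V) (y : V) := by
  obtain ⟨hx, hy, hxy⟩ := hsep
  refine ⟨hx, hy, fun hreach => hxy ?_⟩
  have hout : ∀ b, b ∉ L ∪ S ∪ UR → b ∈ R \ UR := fun b hb =>
    ⟨((hUnion.superset (Set.mem_univ b) : b ∈ L ∪ S ∪ R)).resolve_left fun h => hb (.inl h),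
      fun h => hb (.inr h)⟩
  have hSUR : ∀ (a : ↥(L ∪ S ∪ UR)) b, b ∉ L ∪ S ∪ UR → G.Adj a b → (a : V) ∈ S ∪ UR := by
    intro a b hb hab
    obtain (haL | haS) | haUR := a.2
    · exact absurd hab (hnoedge a haL b (hout b hb).1)
    · exact .inl haS
    · exact .inr haUR
  obtain ⟨u, huF, hhub⟩ : ∃ u : ↥(L ∪ S ∪ UR), (u : V) ∉ F ∧
      ∀ (a : ↥(L ∪ S ∪ UR)) (b : V), b ∉ L ∪ S ∪ UR → G.Adj a b → a ≠ u →
        (leftGraph G S UR (L ∪ S ∪ UR)).Adj a u := by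
    by_cases hW : ∃ b, b ∉ L ∪ S ∪ UR
    · obtain ⟨b, hb⟩ := hW
      obtain ⟨u, huUR, huF⟩ :=
        Set.nonempty_sdiff_of_ncard_eq_min hURsub hURcard hFcard ⟨b, hout b hb⟩
      exact ⟨⟨u, .inr huUR⟩, huF, fun a b hb hab hne =>
        leftGraph_adj_of_mem hne (hSUR a b hb hab) huUR⟩
    · exact ⟨x, hx, fun _ b hb => absurd ⟨b, hb⟩ hW⟩
  exact reachable_induce_of_hub (fun _ _ => leftGraph_adj_of_adj) u huF hhub hx hy hreach

/-- Soundness of the left graph: if `F ⊆ V(G_L)`, `|F| ≤ f`, and `F` separates two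
vertices `x, y` in `G_L`, then `F` separates `x` and `y` in `G`. -/
theorem stmt3 {V : Type*} [Fintype V] (G : SimpleGraph V) (f : ℕ) (hf : 1 ≤ f)
    (L S R : Set V) (hLne : L.Nonempty) (hRne : R.Nonempty)
    (hUnion : L ∪ S ∪ R = Set.univ) (hLS : Disjoint L S) (hLR : Disjoint L R)
    (hSR : Disjoint S R)
    (hnoedge : ∀ a ∈ L, ∀ b ∈ R, ¬ G.Adj a b)
    (UR : Set V) (hURsub : UR ⊆ R) (hURcard : UR.ncard = min (f + 1) R.ncard)
    (F : Set V) (hFsub : F ⊆ L ∪ S ∪ UR) (hFcard : F.ncard ≤ f)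
    (x y : ↥(L ∪ S ∪ UR))
    (hsep : (leftGraph G S UR (L ∪ S ∪ UR)).SepPair
      {a : ↥(L ∪ S ∪ UR) | (a : V) ∈ F} x y) :
    G.SepPair F (x : V) (y : V) :=
  stmt3_general G f L S R hUnion hnoedge UR hURsub hURcard F hFcard x y hsep
end

section
/- Let G be an undirected graph with terminal set T ⊆ V and a vertex T-cut (L,S,R), where U_R consists of min(f+1,|R|) vertices of R chosen so that terminals of T ∩ R come first, and symmetrically U_L for L. Let G_L, G_R be the f-left and f-right graphs. If F ⊆ V with |F| ≤ f separates T in G but does not separate S in G, then either F ∩ V(G_L) separates T ∩ V(G_L) in G_L, or F ∩ V(G_R) separates T ∩ V(G_R) in G_R. -/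
/-!
Let `a, b` be terminals disconnected in `G - F`. As `S \ F` lies in a single component of
`G - F`, one of them, say `a`, has a component avoiding `S`; that component then stays on the
side of `a`, say `L`, where `G_L` adds no edges, so it is also the component of `a` in
`G_L - F`. A terminal of `G_L - F` outside it is `b` itself unless `b ∈ R \ U_R`; then
`U_R ⊆ T`, and `U_R \ F` is nonempty because `|F| ≤ f < |U_R|` unless `U_R = R`.
-/

open SimpleGraph

theorem SimpleGraph.Reachable.mem_of_adj_closed {W : Type*} {H : SimpleGraph W} {C : Set W}
    (hC : ∀ ⦃x y⦄, x ∈ C → H.Adj x y → y ∈ C) {u v : W} (hu : u ∈ C) (h : H.Reachable u v) :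
    v ∈ C := by
  rw [reachable_iff_reflTransGen] at h
  induction h with
  | refl => exact hu
  | tail _ hadj ih => exact hC ih hadj

theorem Set.diff_nonempty_of_ncard_eq_min {V : Type*} [Finite V] {R U F : Set V} {f : ℕ}
    (hUR : U ⊆ R) (hU : U.ncard = min (f + 1) R.ncard) (hF : F.ncard ≤ f)
    (hRF : (R \ F).Nonempty) : (U \ F).Nonempty := by
  by_contra hUF
  have hUF : U ⊆ F := fun x hxU => by_contra fun hxF => hUF ⟨x, hxU, hxF⟩
  have hUf : U.ncard ≤ f := (Set.ncard_le_ncard hUF).trans hF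
  have hU_eq : U = R := Set.eq_of_subset_of_ncard_le hUR (by omega)
  obtain ⟨x, hxR, hxF⟩ := hRF
  exact hxF (hUF (hU_eq ▸ hxR))

theorem leftGraph_adj_of_notMem {V : Type*} {G : SimpleGraph V} {S UR W : Set V} {a b : ↥W}
    (haUR : (a : V) ∉ UR) (haS : (a : V) ∉ S) (h : (leftGraph G S UR W).Adj a b) :
    G.Adj a b := by
  rcases h.2 with h | ⟨h, -⟩ | ⟨h, -⟩ | ⟨h, -⟩
  exacts [h, (haUR h).elim, (haUR h).elim, (haS h).elim]

section Cut

variable {V : Type*} {G : SimpleGraph V} {T L S R F : Set V}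

/-- If neither `t₁` nor `t₂` could avoid the (connected) rest of `S`, they would be joined
through it. -/
theorem SimpleGraph.SepSet.exists_avoiding (hsepT : G.SepSet F T) (hnsepS : ¬ G.SepSet F S) :
    ∃ a b : ↥Fᶜ, (a : V) ∈ T ∧ (b : V) ∈ T ∧ ¬ (G.induce Fᶜ).Reachable a b ∧
      ∀ s : ↥Fᶜ, (s : V) ∈ S → ¬ (G.induce Fᶜ).Reachable a s := by
  obtain ⟨t₁, t₂, ht₁, ht₂, h₁₂⟩ := hsepT
  by_cases h₁ : ∃ s₁ : ↥Fᶜ, (s₁ : V) ∈ S ∧ (G.induce Fᶜ).Reachable t₁ s₁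
  · obtain ⟨s₁, hs₁, hr₁⟩ := h₁
    refine ⟨t₂, t₁, ht₂, ht₁, fun h => h₁₂ h.symm, fun s₂ hs₂ hr₂ => h₁₂ ?_⟩
    have hs₁₂ : (G.induce Fᶜ).Reachable s₁ s₂ := by
      by_contra h
      exact hnsepS ⟨s₁, s₂, hs₁, hs₂, h⟩
    exact hr₁.trans (hs₁₂.trans hr₂.symm)
  · exact ⟨t₁, t₂, ht₁, ht₂, h₁₂, fun s hs hr => h₁ ⟨s, hs, hr⟩⟩

theorem mem_of_reachable_of_avoiding (hUnion : L ∪ S ∪ R = Set.univ)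
    (hnoedge : ∀ a ∈ L, ∀ b ∈ R, ¬ G.Adj a b) {a v : ↥Fᶜ} (haL : (a : V) ∈ L)
    (haS : ∀ s : ↥Fᶜ, (s : V) ∈ S → ¬ (G.induce Fᶜ).Reachable a s)
    (h : (G.induce Fᶜ).Reachable a v) : (v : V) ∈ L := by
  refine (h.mem_of_adj_closed (C := {x : ↥Fᶜ | (x : V) ∈ L ∧ (G.induce Fᶜ).Reachable a x}) ?_
    ⟨haL, Reachable.refl a⟩).1
  rintro x y ⟨hxL, hax⟩ hxy
  have hay := hax.trans hxy.reachable
  refine ⟨?_, hay⟩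
  have hy : (y : V) ∈ L ∪ S ∪ R := hUnion ▸ Set.mem_univ _
  rcases hy with (hy | hy) | hy
  exacts [hy, (haS y hy hay).elim, (hnoedge _ hxL _ hy hxy).elim]

/-- On the side of `a`, the left graph adds no edges, so the component of `a` in `G_L - F` is
the one in `G - F`. -/
theorem reachable_of_leftGraph_reachable (hUnion : L ∪ S ∪ R = Set.univ)
    (hLR : Disjoint L R) (hnoedge : ∀ a ∈ L, ∀ b ∈ R, ¬ G.Adj a b) {UR : Set V}
    (hURsub : UR ⊆ R) {a : ↥Fᶜ} (haL : (a : V) ∈ L)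
    (haS : ∀ s : ↥Fᶜ, (s : V) ∈ S → ¬ (G.induce Fᶜ).Reachable a s)
    {y : ↥{x : ↥(L ∪ S ∪ UR) | (x : V) ∈ F}ᶜ}
    (h : ((leftGraph G S UR (L ∪ S ∪ UR)).induce {x : ↥(L ∪ S ∪ UR) | (x : V) ∈ F}ᶜ).Reachable
      ⟨⟨a, Or.inl (Or.inl haL)⟩, a.2⟩ y) :
    (G.induce Fᶜ).Reachable a ⟨y.1, y.2⟩ := by
  refine h.mem_of_adj_closed (C := {x | (G.induce Fᶜ).Reachable a ⟨x.1, x.2⟩}) ?_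
    (Reachable.refl a)
  intro x z (hax : (G.induce Fᶜ).Reachable a ⟨x.1, x.2⟩) hxz
  have hxL := mem_of_reachable_of_avoiding hUnion hnoedge haL haS hax
  have hGxz : G.Adj x.1 z.1 :=
    leftGraph_adj_of_notMem (fun h => hLR.ne_of_mem hxL (hURsub h) rfl)
      (fun h => haS _ h hax) hxz
  exact hax.trans (Adj.reachable (G := G.induce Fᶜ) hGxz)

theorem leftGraph_sepSet_of_avoiding [Finite V] {f : ℕ} (hUnion : L ∪ S ∪ R = Set.univ)
    (hLR : Disjoint L R) (hnoedge : ∀ a ∈ L, ∀ b ∈ R, ¬ G.Adj a b) {UR : Set V}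
    (hURsub : UR ⊆ R) (hURcard : UR.ncard = min (f + 1) R.ncard)
    (hURfirst : T ∩ R ⊆ UR ∨ UR ⊆ T) (hFcard : F.ncard ≤ f)
    {a b : ↥Fᶜ} (haT : (a : V) ∈ T) (hbT : (b : V) ∈ T)
    (hab : ¬ (G.induce Fᶜ).Reachable a b) (haL : (a : V) ∈ L)
    (haS : ∀ s : ↥Fᶜ, (s : V) ∈ S → ¬ (G.induce Fᶜ).Reachable a s) :
    (leftGraph G S UR (L ∪ S ∪ UR)).SepSet
      {x : ↥(L ∪ S ∪ UR) | (x : V) ∈ F} {x : ↥(L ∪ S ∪ UR) | (x : V) ∈ T} := by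
  obtain ⟨w, hwW, hwT, haw⟩ : ∃ w : ↥Fᶜ, (w : V) ∈ L ∪ S ∪ UR ∧ (w : V) ∈ T ∧
      ¬ (G.induce Fᶜ).Reachable a w := by
    have hb : (b : V) ∈ L ∪ S ∪ R := hUnion ▸ Set.mem_univ _
    rcases hb with hbLS | hbR
    · exact ⟨b, Or.inl hbLS, hbT, hab⟩
    rcases hURfirst with hTR | hUT
    · exact ⟨b, Or.inr (hTR ⟨hbT, hbR⟩), hbT, hab⟩
    -- `b` itself may have been dropped from `G_L`; a surviving vertex of `U_R` replaces it.
    obtain ⟨u, huU, huF⟩ :=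
      Set.diff_nonempty_of_ncard_eq_min hURsub hURcard hFcard ⟨b, hbR, b.2⟩
    refine ⟨⟨u, huF⟩, Or.inr huU, hUT huU, fun hau => ?_⟩
    exact hLR.ne_of_mem (mem_of_reachable_of_avoiding hUnion hnoedge haL haS hau) (hURsub huU) rfl
  refine ⟨⟨⟨a, Or.inl (Or.inl haL)⟩, a.2⟩, ⟨⟨w, hwW⟩, w.2⟩, haT, hwT, fun h => haw ?_⟩
  exact reachable_of_leftGraph_reachable hUnion hLR hnoedge hURsub haL haS h

end Cut

theorem stmt4_general {V : Type*} [Fintype V] (G : SimpleGraph V) (f : ℕ)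
    (T L S R : Set V)
    (hUnion : L ∪ S ∪ R = Set.univ) (hLR : Disjoint L R)
    (hnoedge : ∀ a ∈ L, ∀ b ∈ R, ¬ G.Adj a b)
    (UL : Set V) (hULsub : UL ⊆ L) (hULcard : UL.ncard = min (f + 1) L.ncard)
    (hULfirst : T ∩ L ⊆ UL ∨ UL ⊆ T)
    (UR : Set V) (hURsub : UR ⊆ R) (hURcard : UR.ncard = min (f + 1) R.ncard)
    (hURfirst : T ∩ R ⊆ UR ∨ UR ⊆ T)
    (F : Set V) (hFcard : F.ncard ≤ f)
    (hsepT : G.SepSet F T) (hnsepS : ¬ G.SepSet F S) :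
    (leftGraph G S UR (L ∪ S ∪ UR)).SepSet
        {a : ↥(L ∪ S ∪ UR) | (a : V) ∈ F} {a : ↥(L ∪ S ∪ UR) | (a : V) ∈ T} ∨
      (leftGraph G S UL (R ∪ S ∪ UL)).SepSet
        {a : ↥(R ∪ S ∪ UL) | (a : V) ∈ F} {a : ↥(R ∪ S ∪ UL) | (a : V) ∈ T} := by
  obtain ⟨a, b, haT, hbT, hab, haS⟩ := hsepT.exists_avoiding hnsepS
  have ha : (a : V) ∈ L ∪ S ∪ R := hUnion ▸ Set.mem_univ _
  rcases ha with (haL | haS') | haR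
  · exact Or.inl (leftGraph_sepSet_of_avoiding hUnion hLR hnoedge hURsub hURcard hURfirst
      hFcard haT hbT hab haL haS)
  · exact (haS a haS' (Reachable.refl a)).elim
  · have hUnion' : R ∪ S ∪ L = Set.univ := by
      rw [← hUnion, Set.union_right_comm R, Set.union_comm R L, Set.union_right_comm L]
    exact Or.inr (leftGraph_sepSet_of_avoiding hUnion' hLR.symm
      (fun x hx y hy h => hnoedge y hy x hx h.symm) hULsub hULcard hULfirst
      hFcard haT hbT hab haR haS)

/-- Completeness of the left/right graphs: if `F` (of size `≤ f`) separates `T` in `G`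
but does not separate `S`, then `F ∩ V(G_L)` separates `T ∩ V(G_L)` in `G_L`, or
`F ∩ V(G_R)` separates `T ∩ V(G_R)` in `G_R`. -/
theorem stmt4 {V : Type*} [Fintype V] (G : SimpleGraph V) (f : ℕ) (hf : 1 ≤ f)
    (T L S R : Set V) (hLne : L.Nonempty) (hRne : R.Nonempty)
    (hUnion : L ∪ S ∪ R = Set.univ) (hLS : Disjoint L S) (hLR : Disjoint L R)
    (hSR : Disjoint S R)
    (hnoedge : ∀ a ∈ L, ∀ b ∈ R, ¬ G.Adj a b)
    (hTL : (T ∩ L).Nonempty) (hTR : (T ∩ R).Nonempty)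
    (UL : Set V) (hULsub : UL ⊆ L) (hULcard : UL.ncard = min (f + 1) L.ncard)
    (hULfirst : T ∩ L ⊆ UL ∨ UL ⊆ T)
    (UR : Set V) (hURsub : UR ⊆ R) (hURcard : UR.ncard = min (f + 1) R.ncard)
    (hURfirst : T ∩ R ⊆ UR ∨ UR ⊆ T)
    (F : Set V) (hFcard : F.ncard ≤ f)
    (hsepT : G.SepSet F T) (hnsepS : ¬ G.SepSet F S) :
    (leftGraph G S UR (L ∪ S ∪ UR)).SepSet
        {a : ↥(L ∪ S ∪ UR) | (a : V) ∈ F} {a : ↥(L ∪ S ∪ UR) | (a : V) ∈ T} ∨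
      (leftGraph G S UL (R ∪ S ∪ UL)).SepSet
        {a : ↥(R ∪ S ∪ UL) | (a : V) ∈ F} {a : ↥(R ∪ S ∪ UL) | (a : V) ∈ T} :=
  stmt4_general G f T L S R hUnion hLR hnoedge UL hULsub hULcard hULfirst UR hURsub hURcard hURfirst
    F hFcard hsepT hnsepS
end

section
/- Let G be an f-vertex-connected undirected graph with terminal set T and a vertex T-cut (L,S,R), with f-left and f-right graphs G_L and G_R. Let F ⊆ V with |F| = f. If F separates T in G but does not separate S in G, then either F ⊆ L ∪ S and F separates T ∩ V(G_L) in G_L, or F ⊆ R ∪ S and F separates T ∩ V(G_R) in G_R. -/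
open SimpleGraph

/-!
Since `F` does not separate `S`, one of the two terminals separated by `F` has a component `C`
in `G - F` that misses `S`; as there are no `L`–`R` edges, `C` lies entirely in `L` (say).
The vertices of `F` adjacent to `C` form a vertex cut, so by `f`-connectivity they are all of
`F`; hence `F ⊆ L ∪ S`. The extra edges of `G_L` only join vertices of `U_R ∪ S`, so `C` is
still a component of `G_L - F`, and it misses either the other terminal or a terminal in `U_R`.
-/

namespace SimpleGraph

variable {α : Type*} {G : SimpleGraph α} {F : Set α}

def componentAvoiding (G : SimpleGraph α) (F : Set α) (t : ↥Fᶜ) : Set α :=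
  {v | ∃ hv : v ∉ F, (G.induce Fᶜ).Reachable t ⟨v, hv⟩}

theorem coe_mem_componentAvoiding_iff {t u : ↥Fᶜ} :
    (u : α) ∈ G.componentAvoiding F t ↔ (G.induce Fᶜ).Reachable t u :=
  ⟨fun ⟨_, h⟩ => h, fun h => ⟨u.2, h⟩⟩

theorem self_mem_componentAvoiding (t : ↥Fᶜ) : (t : α) ∈ G.componentAvoiding F t :=
  coe_mem_componentAvoiding_iff.2 .rfl

theorem mem_componentAvoiding_of_adj {t : ↥Fᶜ} {u v : α} (hu : u ∈ G.componentAvoiding F t)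
    (hv : v ∉ F) (huv : G.Adj u v) : v ∈ G.componentAvoiding F t :=
  ⟨hv, hu.2.trans (Adj.reachable (G := G.induce Fᶜ) huv)⟩

theorem componentAvoiding_subset {t : ↥Fᶜ} {D : Set α}
    (hD : ∀ u v, u ∈ D → v ∉ F → G.Adj u v → v ∈ D) (ht : (t : α) ∈ D) :
    G.componentAvoiding F t ⊆ D := by
  suffices ∀ w : ↥Fᶜ, (G.induce Fᶜ).Reachable t w → (w : α) ∈ D from
    fun v ⟨_, h⟩ => this _ h
  rintro w ⟨p⟩
  induction p with
  | nil => exact ht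
  | @cons _ v _ huv _ ih => exact ih (hD _ _ ht v.2 huv)

theorem disjoint_componentAvoiding_or_disjoint {s t : ↥Fᶜ} {S : Set α}
    (hS : ¬ G.SepSet F S) (hst : ¬ (G.induce Fᶜ).Reachable s t) :
    Disjoint (G.componentAvoiding F s) S ∨ Disjoint (G.componentAvoiding F t) S := by
  by_contra! h
  obtain ⟨⟨z₁, hz₁s, hz₁S⟩, ⟨z₂, hz₂t, hz₂S⟩⟩ :=
    And.intro (Set.not_disjoint_iff.1 h.1) (Set.not_disjoint_iff.1 h.2)
  have hz : (G.induce Fᶜ).Reachable ⟨z₁, hz₁s.1⟩ ⟨z₂, hz₂t.1⟩ := by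
    by_contra hz
    exact hS ⟨_, _, hz₁S, hz₂S, hz⟩
  exact hst (hz₁s.2.trans (hz.trans hz₂t.2.symm))

theorem exists_adj_mem_componentAvoiding (hF : F.Finite)
    (hmin : ∀ C, G.IsVertexCut C → F.ncard ≤ C.ncard) {t t' : ↥Fᶜ}
    (hsep : ¬ (G.induce Fᶜ).Reachable t t') {x : α} (hx : x ∈ F) :
    ∃ u ∈ G.componentAvoiding F t, G.Adj u x := by
  set N := {x ∈ F | ∃ u ∈ G.componentAvoiding F t, G.Adj u x}
  have hcut : G.IsVertexCut N := by
    let tN : ↥Nᶜ := ⟨t, fun h => t.2 h.1⟩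
    have hsub : G.componentAvoiding N tN ⊆ G.componentAvoiding F t := by
      refine componentAvoiding_subset (fun u v hu hvN huv => ?_) (self_mem_componentAvoiding t)
      exact mem_componentAvoiding_of_adj hu (fun hvF => hvN ⟨hvF, u, hu, huv⟩) huv
    refine ⟨tN, ⟨t', fun h => t'.2 h.1⟩, fun h => hsep ?_⟩
    exact coe_mem_componentAvoiding_iff.1 (hsub (coe_mem_componentAvoiding_iff.2 h))
  have hNF : N = F := Set.eq_of_subset_of_ncard_le (fun _ hx => hx.1) (hmin N hcut) hF
  exact (hNF ▸ hx : x ∈ N).2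

theorem leftGraph_adj_of_notMem {S UR W : Set α} {a b : ↥W} (haUR : (a : α) ∉ UR)
    (haS : (a : α) ∉ S) (hab : (leftGraph G S UR W).Adj a b) : G.Adj a b := by
  rcases hab.2 with h | ⟨h, -⟩ | ⟨h, -⟩ | ⟨h, -⟩
  · exact h
  · exact absurd h haUR
  · exact absurd h haUR
  · exact absurd h haS

section Side

variable {L S R UR T : Set α}
  (hcover : L ∪ S ∪ R = Set.univ) (hnoedge : ∀ a ∈ L, ∀ b ∈ R, ¬ G.Adj a b)

include hcover hnoedge in
theorem componentAvoiding_subset_of_disjoint {t : ↥Fᶜ} (htL : (t : α) ∈ L)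
    (hS : Disjoint (G.componentAvoiding F t) S) : G.componentAvoiding F t ⊆ L := by
  refine Set.subset_inter_iff.1
    (componentAvoiding_subset ?_ ⟨self_mem_componentAvoiding (G := G) t, htL⟩) |>.2
  rintro u v ⟨huC, huL⟩ hv huv
  have hvC := mem_componentAvoiding_of_adj huC hv huv
  have hvLSR : v ∈ L ∪ S ∪ R := hcover ▸ Set.mem_univ v
  rcases hvLSR with (hvL | hvS) | hvR
  · exact ⟨hvC, hvL⟩
  · exact absurd hvS (Set.disjoint_left.1 hS hvC)
  · exact absurd huv (hnoedge u huL v hvR)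

include hcover hnoedge in
theorem subset_union_of_componentAvoiding_subset (hF : F.Finite)
    (hmin : ∀ C, G.IsVertexCut C → F.ncard ≤ C.ncard) {t t' : ↥Fᶜ}
    (hsep : ¬ (G.induce Fᶜ).Reachable t t') (hCL : G.componentAvoiding F t ⊆ L) :
    F ⊆ L ∪ S := by
  intro x hx
  obtain ⟨u, hu, hux⟩ := exists_adj_mem_componentAvoiding hF hmin hsep hx
  have hxLSR : x ∈ L ∪ S ∪ R := hcover ▸ Set.mem_univ x
  rcases hxLSR with hxLS | hxR
  · exact hxLS
  · exact absurd hux (hnoedge u (hCL hu) x hxR)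

include hcover in
theorem sepSet_leftGraph_of_componentAvoiding_subset (hLS : Disjoint L S) (hLR : Disjoint L R)
    (hSR : Disjoint S R) (hURsub : UR ⊆ R) (hURne : UR.Nonempty)
    (hURfirst : T ∩ R ⊆ UR ∨ UR ⊆ T) (hFLS : F ⊆ L ∪ S) {t t' : ↥Fᶜ} (htT : (t : α) ∈ T)
    (ht'T : (t' : α) ∈ T) (hsep : ¬ (G.induce Fᶜ).Reachable t t')
    (hCL : G.componentAvoiding F t ⊆ L) :
    (leftGraph G S UR (L ∪ S ∪ UR)).SepSet
      {a : ↥(L ∪ S ∪ UR) | (a : α) ∈ F} {a : ↥(L ∪ S ∪ UR) | (a : α) ∈ T} := by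
  set W := L ∪ S ∪ UR
  have htL : (t : α) ∈ L := hCL (self_mem_componentAvoiding t)
  let tW : ↥{a : ↥W | (a : α) ∈ F}ᶜ := ⟨⟨t, Or.inl (Or.inl htL)⟩, t.2⟩
  -- the extra edges of the left graph join vertices of `UR ∪ S`, which the component misses
  have hsub : (leftGraph G S UR W).componentAvoiding {a | (a : α) ∈ F} tW ⊆
      Subtype.val ⁻¹' G.componentAvoiding F t := by
    refine componentAvoiding_subset (fun a b ha hb hab => ?_) (self_mem_componentAvoiding t)
    have haL : (a : α) ∈ L := hCL ha
    refine mem_componentAvoiding_of_adj ha hb (leftGraph_adj_of_notMem ?_ ?_ hab)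
    · exact fun haUR => Set.disjoint_left.1 hLR haL (hURsub haUR)
    · exact Set.disjoint_left.1 hLS haL
  have hsepW : ∀ y ∈ W, y ∈ T → y ∉ F → y ∉ G.componentAvoiding F t →
      (leftGraph G S UR W).SepSet {a | (a : α) ∈ F} {a | (a : α) ∈ T} :=
    fun y hyW hyT hyF hyC => ⟨tW, ⟨⟨y, hyW⟩, hyF⟩, htT, hyT,
      fun h => hyC (hsub (coe_mem_componentAvoiding_iff.2 h))⟩
  have ht'C : (t' : α) ∉ G.componentAvoiding F t :=
    fun h => hsep (coe_mem_componentAvoiding_iff.1 h)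
  by_cases ht'W : (t' : α) ∈ W
  · exact hsepW t' ht'W ht'T t'.2 ht'C
  have ht'R : (t' : α) ∈ R := by
    have : (t' : α) ∈ L ∪ S ∪ R := hcover ▸ Set.mem_univ _
    exact this.resolve_left (fun h => ht'W (Or.inl h))
  have hURT : UR ⊆ T := hURfirst.resolve_left (fun h => ht'W (Or.inr (h ⟨ht'T, ht'R⟩)))
  obtain ⟨u, hu⟩ := hURne
  have huR : u ∈ R := hURsub hu
  refine hsepW u (Or.inr hu) (hURT hu) (fun huF => ?_) (fun huC => ?_)
  · rcases hFLS huF with huL | huS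
    · exact Set.disjoint_left.1 hLR huL huR
    · exact Set.disjoint_left.1 hSR huS huR
  · exact Set.disjoint_left.1 hLR (hCL huC) huR

include hcover hnoedge in
theorem sepSet_leftGraph_of_disjoint (hLS : Disjoint L S) (hLR : Disjoint L R)
    (hSR : Disjoint S R) (hURsub : UR ⊆ R) (hURne : UR.Nonempty)
    (hURfirst : T ∩ R ⊆ UR ∨ UR ⊆ T) (hF : F.Finite)
    (hmin : ∀ C, G.IsVertexCut C → F.ncard ≤ C.ncard) {t t' : ↥Fᶜ} (htT : (t : α) ∈ T)
    (ht'T : (t' : α) ∈ T) (hsep : ¬ (G.induce Fᶜ).Reachable t t') (htL : (t : α) ∈ L)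
    (hS : Disjoint (G.componentAvoiding F t) S) :
    F ⊆ L ∪ S ∧ (leftGraph G S UR (L ∪ S ∪ UR)).SepSet
      {a : ↥(L ∪ S ∪ UR) | (a : α) ∈ F} {a : ↥(L ∪ S ∪ UR) | (a : α) ∈ T} := by
  have hCL := componentAvoiding_subset_of_disjoint hcover hnoedge htL hS
  have hFLS := subset_union_of_componentAvoiding_subset hcover hnoedge hF hmin hsep hCL
  exact ⟨hFLS, sepSet_leftGraph_of_componentAvoiding_subset hcover hLS hLR hSR hURsub hURne
    hURfirst hFLS htT ht'T hsep hCL⟩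

end Side

end SimpleGraph

theorem Set.nonempty_of_ncard_eq_min_succ {α : Type*} [Finite α] {U R : Set α} {k : ℕ}
    (hR : R.Nonempty) (hU : U.ncard = min (k + 1) R.ncard) : U.Nonempty :=
  Set.nonempty_of_ncard_ne_zero
    (hU ▸ (lt_min k.succ_pos ((Set.ncard_pos R.toFinite).2 hR)).ne')

theorem stmt5_general {V : Type*} [Fintype V] (G : SimpleGraph V) (f : ℕ)
    (hfconn : ∀ C : Set V, G.IsVertexCut C → f ≤ C.ncard)
    (T L S R : Set V) (hLne : L.Nonempty) (hRne : R.Nonempty)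
    (hUnion : L ∪ S ∪ R = Set.univ) (hLS : Disjoint L S) (hLR : Disjoint L R)
    (hSR : Disjoint S R)
    (hnoedge : ∀ a ∈ L, ∀ b ∈ R, ¬ G.Adj a b)
    (UL : Set V) (hULsub : UL ⊆ L) (hULcard : UL.ncard = min (f + 1) L.ncard)
    (hULfirst : T ∩ L ⊆ UL ∨ UL ⊆ T)
    (UR : Set V) (hURsub : UR ⊆ R) (hURcard : UR.ncard = min (f + 1) R.ncard)
    (hURfirst : T ∩ R ⊆ UR ∨ UR ⊆ T)
    (F : Set V) (hFcard : F.ncard = f)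
    (hsepT : G.SepSet F T) (hnsepS : ¬ G.SepSet F S) :
    (F ⊆ L ∪ S ∧ (leftGraph G S UR (L ∪ S ∪ UR)).SepSet
        {a : ↥(L ∪ S ∪ UR) | (a : V) ∈ F} {a : ↥(L ∪ S ∪ UR) | (a : V) ∈ T}) ∨
      (F ⊆ R ∪ S ∧ (leftGraph G S UL (R ∪ S ∪ UL)).SepSet
        {a : ↥(R ∪ S ∪ UL) | (a : V) ∈ F} {a : ↥(R ∪ S ∪ UL) | (a : V) ∈ T}) := by
  obtain ⟨s, t, hsT, htT, hst⟩ := hsepT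
  have hmin : ∀ C, G.IsVertexCut C → F.ncard ≤ C.ncard := hFcard ▸ hfconn
  obtain ⟨a, b, haT, hbT, hab, haS⟩ : ∃ a b : ↥Fᶜ, (a : V) ∈ T ∧ (b : V) ∈ T ∧
      ¬ (G.induce Fᶜ).Reachable a b ∧ Disjoint (G.componentAvoiding F a) S := by
    rcases disjoint_componentAvoiding_or_disjoint hnsepS hst with h | h
    · exact ⟨s, t, hsT, htT, hst, h⟩
    · exact ⟨t, s, htT, hsT, fun h' => hst h'.symm, h⟩
  have haLSR : (a : V) ∈ L ∪ S ∪ R := hUnion ▸ Set.mem_univ _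
  rcases haLSR with (haL | haS') | haR
  · exact Or.inl (sepSet_leftGraph_of_disjoint hUnion hnoedge hLS hLR hSR hURsub
      (Set.nonempty_of_ncard_eq_min_succ hRne hURcard) hURfirst F.toFinite hmin
      haT hbT hab haL haS)
  · exact absurd haS' (Set.disjoint_left.1 haS (self_mem_componentAvoiding a))
  · have hUnion' : R ∪ S ∪ L = Set.univ := by
      rw [← hUnion, Set.union_comm R, Set.union_comm L, Set.union_right_comm]
    exact Or.inr (sepSet_leftGraph_of_disjoint hUnion'
      (fun a ha b hb h => hnoedge b hb a ha h.symm) hSR.symm hLR.symm hLS.symm hULsub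
      (Set.nonempty_of_ncard_eq_min_succ hLne hULcard) hULfirst
      F.toFinite hmin haT hbT hab haR haS)

/-- In an `f`-connected graph (every vertex cut has size `≥ f`), if `F` of size exactly `f`
separates `T` but not `S`, then either `F ⊆ L ∪ S` and `F` separates `T ∩ V(G_L)` in `G_L`,
or `F ⊆ R ∪ S` and `F` separates `T ∩ V(G_R)` in `G_R`. -/
theorem stmt5 {V : Type*} [Fintype V] (G : SimpleGraph V) (f : ℕ) (hf : 1 ≤ f)
    (hfconn : ∀ C : Set V, G.IsVertexCut C → f ≤ C.ncard)
    (T L S R : Set V) (hLne : L.Nonempty) (hRne : R.Nonempty)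
    (hUnion : L ∪ S ∪ R = Set.univ) (hLS : Disjoint L S) (hLR : Disjoint L R)
    (hSR : Disjoint S R)
    (hnoedge : ∀ a ∈ L, ∀ b ∈ R, ¬ G.Adj a b)
    (hTL : (T ∩ L).Nonempty) (hTR : (T ∩ R).Nonempty)
    (UL : Set V) (hULsub : UL ⊆ L) (hULcard : UL.ncard = min (f + 1) L.ncard)
    (hULfirst : T ∩ L ⊆ UL ∨ UL ⊆ T)
    (UR : Set V) (hURsub : UR ⊆ R) (hURcard : UR.ncard = min (f + 1) R.ncard)
    (hURfirst : T ∩ R ⊆ UR ∨ UR ⊆ T)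
    (F : Set V) (hFcard : F.ncard = f)
    (hsepT : G.SepSet F T) (hnsepS : ¬ G.SepSet F S) :
    (F ⊆ L ∪ S ∧ (leftGraph G S UR (L ∪ S ∪ UR)).SepSet
        {a : ↥(L ∪ S ∪ UR) | (a : V) ∈ F} {a : ↥(L ∪ S ∪ UR) | (a : V) ∈ T}) ∨
      (F ⊆ R ∪ S ∧ (leftGraph G S UL (R ∪ S ∪ UL)).SepSet
        {a : ↥(R ∪ S ∪ UL) | (a : V) ∈ F} {a : ↥(R ∪ S ∪ UL) | (a : V) ∈ T}) :=
  stmt5_general G f hfconn T L S R hLne hRne hUnion hLS hLR hSR hnoedge UL hULsub hULcard hULfirst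
    UR hURsub hURcard hURfirst F hFcard hsepT hnsepS
end

section
/- If G has arboricity α, then the f-left graph G_L (and symmetrically G_R) has arboricity at most α + f + 1. -/
/-!
The edges of `G_L` that are edges of `G` are covered by the `α` forests of `G`, restricted to
`L ∪ S ∪ U_R`. Every other edge of `G_L` has an endpoint in `U_R`, so the at most `f + 1` stars
centred at the vertices of `U_R` cover them.
-/

open SimpleGraph

/-- `G` has arboricity at most `k`: the edges of `G` are covered by `k` forests. -/
def ArboricityLE {α : Type*} (G : SimpleGraph α) (k : ℕ) : Prop :=
  ∃ H : Fin k → SimpleGraph α, (∀ i, (H i).IsAcyclic) ∧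
    ∀ a b, G.Adj a b → ∃ i, (H i).Adj a b

namespace ArboricityLE

variable {α β : Type*} {G G' : SimpleGraph α} {k : ℕ}

theorem mono (h : ArboricityLE G k) (hle : G' ≤ G) : ArboricityLE G' k := by
  obtain ⟨H, hacyc, hcover⟩ := h
  exact ⟨H, hacyc, fun a b hab => hcover a b (hle hab)⟩

theorem comap {G : SimpleGraph β} (h : ArboricityLE G k) (f : α ↪ β) :
    ArboricityLE (G.comap f) k := by
  obtain ⟨H, hacyc, hcover⟩ := h
  exact ⟨fun i => (H i).comap f, fun i => (hacyc i).of_comap f, fun a b hab => hcover _ _ hab⟩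

theorem sup {k' : ℕ} (h : ArboricityLE G k) (h' : ArboricityLE G' k') :
    ArboricityLE (G ⊔ G') (k + k') := by
  obtain ⟨H, hacyc, hcover⟩ := h
  obtain ⟨H', hacyc', hcover'⟩ := h'
  refine ⟨Fin.append H H', fun i => ?_, ?_⟩
  · cases i using Fin.addCases with
    | left i => simpa only [Fin.append_left] using hacyc i
    | right i => simpa only [Fin.append_right] using hacyc' i
  · rintro a b (hab | hab)
    · obtain ⟨i, hi⟩ := hcover a b hab
      exact ⟨Fin.castAdd k' i, by rwa [Fin.append_left]⟩
    · obtain ⟨i, hi⟩ := hcover' a b hab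
      exact ⟨Fin.natAdd k i, by rwa [Fin.append_right]⟩

end ArboricityLE

theorem arboricityLE_fromRel_mem {α : Type*} {C : Set α} {k : ℕ} (hC : C.Finite)
    (hk : C.ncard ≤ k) : ArboricityLE (fromRel fun x (_ : α) => x ∈ C) k := by
  have := hC.fintype
  obtain ⟨g⟩ : Nonempty (C ↪ Fin k) := Function.Embedding.nonempty_of_card_le <| by
    rwa [Fintype.card_fin, ← Nat.card_eq_fintype_card, Nat.card_coe_set_eq]
  let H : Fin k → SimpleGraph α := Function.extend g (fun c => starGraph (c : α)) ⊥
  have hH : ∀ c : C, H (g c) = starGraph (c : α) := fun c => g.injective.extend_apply _ _ c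
  refine ⟨H, fun i => ?_, ?_⟩
  · by_cases hi : ∃ c, g c = i
    · obtain ⟨c, rfl⟩ := hi
      rw [hH]
      exact isAcyclic_starGraph _
    · rw [show H i = ⊥ from Function.extend_apply' _ _ _ hi]
      exact isAcyclic_bot
  · rintro x y ⟨hne, hx | hy⟩
    · exact ⟨g ⟨x, hx⟩, by rw [hH, starGraph_adj]; exact ⟨hne, Or.inl rfl⟩⟩
    · exact ⟨g ⟨y, hy⟩, by rw [hH, starGraph_adj]; exact ⟨hne, Or.inr rfl⟩⟩

theorem leftGraph_le_comap_sup {α : Type*} (G : SimpleGraph α) (S UR W : Set α) :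
    leftGraph G S UR W ≤
      G.comap (Function.Embedding.subtype _) ⊔ fromRel fun x (_ : W) => (x : α) ∈ UR := by
  rintro x y ⟨hne, hG | ⟨hx, -⟩ | ⟨hx, -⟩ | ⟨-, hy⟩⟩
  · exact Or.inl hG
  · exact Or.inr ⟨hne, Or.inl hx⟩
  · exact Or.inr ⟨hne, Or.inl hx⟩
  · exact Or.inr ⟨hne, Or.inr hy⟩

theorem stmt6_general {V : Type*} [Fintype V] (G : SimpleGraph V) (a f : ℕ)
    (L S : Set V)
    (UR : Set V) (hURcard : UR.ncard ≤ f + 1)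
    (hG : ArboricityLE G a) :
    ArboricityLE (leftGraph G S UR (L ∪ S ∪ UR)) (a + f + 1) := by
  have hUR : UR ⊆ Set.range (Subtype.val : ↥(L ∪ S ∪ UR) → V) := by
    rw [Subtype.range_coe]
    exact Set.subset_union_right
  have hstars : ArboricityLE (fromRel fun x (_ : ↥(L ∪ S ∪ UR)) => (x : V) ∈ UR) (f + 1) :=
    arboricityLE_fromRel_mem (Set.toFinite _) <|
      (Set.ncard_preimage_of_injective_subset_range Subtype.val_injective hUR).trans_le hURcard
  exact ((hG.comap _).sup hstars).mono (leftGraph_le_comap_sup G S UR _)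

/-- If `G` has arboricity at most `α`, then the `f`-left graph `G_L` has arboricity
at most `α + f + 1`. -/
theorem stmt6 {V : Type*} [Fintype V] (G : SimpleGraph V) (a f : ℕ)
    (L S R : Set V) (hLne : L.Nonempty) (hRne : R.Nonempty)
    (hUnion : L ∪ S ∪ R = Set.univ) (hLS : Disjoint L S) (hLR : Disjoint L R)
    (hSR : Disjoint S R)
    (hnoedge : ∀ x ∈ L, ∀ y ∈ R, ¬ G.Adj x y)
    (UR : Set V) (hURsub : UR ⊆ R) (hURcard : UR.ncard ≤ f + 1)
    (hG : ArboricityLE G a) :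
    ArboricityLE (leftGraph G S UR (L ∪ S ∪ UR)) (a + f + 1) :=
  stmt6_general G a f L S UR hURcard hG
end

section
/- Let G be a graph consisting of vertices {x_a : a ∈ A} ∪ {y₁,…,y_f} ∪ {z}, with edges (x_a, y_i) whenever a_i = 1 and edges (y_i, z) for all i, where A ⊆ {0,1}^f. For b ∈ {0,1}^f, let F_b = {y_i : b_i = 0}. Then there exists a ∈ A orthogonal to b (i.e., ∑_i a_i b_i = 0) if and only if G − F_b is disconnected. (Assume A nonempty and not every coordinate of b is 0, i.e., F_b ≠ {y₁,…,y_f}, or more simply assume some y_i survives.) -/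
open SimpleGraph

/- If `a ⊥ b`, every neighbour `y_i` of `x_a` has `b i = 0` and is deleted, so `x_a` becomes
isolated in `G − F_b` and cannot reach `z`. Otherwise every `x_a` keeps a neighbour `y_i` with
`b i = 1`, every surviving `y_i` is adjacent to `z`, and so everything reaches `z`. -/

/-- The OV graph: vertices `{x_a : a ∈ A} ∪ {y_1,…,y_f} ∪ {z}`; `x_a ~ y_i` iff `a i = 1`,
and `y_i ~ z` for all `i`. -/
def ovGraph (f : ℕ) (A : Set (Fin f → Bool)) : SimpleGraph (↥A ⊕ (Fin f ⊕ Unit)) where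
  Adj p q :=
    match p, q with
    | Sum.inl _, Sum.inl _ => False
    | Sum.inl a, Sum.inr (Sum.inl i) => (a : Fin f → Bool) i = true
    | Sum.inl _, Sum.inr (Sum.inr _) => False
    | Sum.inr (Sum.inl i), Sum.inl a => (a : Fin f → Bool) i = true
    | Sum.inr (Sum.inl _), Sum.inr (Sum.inl _) => False
    | Sum.inr (Sum.inl _), Sum.inr (Sum.inr _) => True
    | Sum.inr (Sum.inr _), Sum.inl _ => False
    | Sum.inr (Sum.inr _), Sum.inr (Sum.inl _) => True
    | Sum.inr (Sum.inr _), Sum.inr (Sum.inr _) => False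
  symm := ⟨by
    rintro (a | i | u) (b | j | w) h <;> exact h⟩
  loopless := ⟨by
    rintro (a | i | u) h <;> exact h⟩

/-- The vertex set of `G − F_b`. -/
def ovSurvivors {f : ℕ} (A : Set (Fin f → Bool)) (b : Fin f → Bool) :
    Set (↥A ⊕ (Fin f ⊕ Unit)) :=
  {p | ∃ i, b i = false ∧ p = Sum.inr (Sum.inl i)}ᶜ

section

variable {f : ℕ} {A : Set (Fin f → Bool)} {b : Fin f → Bool}

theorem ovGraph_adj_inl {a : A} {p : ↥A ⊕ (Fin f ⊕ Unit)} :
    (ovGraph f A).Adj (Sum.inl a) p ↔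
      ∃ i, (a : Fin f → Bool) i = true ∧ p = Sum.inr (Sum.inl i) := by
  rcases p with _ | i | _ <;> simp [ovGraph]

theorem inl_mem_ovSurvivors (a : A) : Sum.inl a ∈ ovSurvivors A b := by
  simp [ovSurvivors]

theorem inr_inr_mem_ovSurvivors (u : Unit) : Sum.inr (Sum.inr u) ∈ ovSurvivors A b := by
  simp [ovSurvivors]

theorem inr_inl_mem_ovSurvivors_iff {i : Fin f} :
    Sum.inr (Sum.inl i) ∈ ovSurvivors A b ↔ b i = true := by
  simp [ovSurvivors]

theorem ovGraph_induce_not_reachable_of_orthogonal {a : A}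
    (hab : ∀ i, (a : Fin f → Bool) i = true → b i = false) :
    ¬ ((ovGraph f A).induce (ovSurvivors A b)).Reachable
      ⟨Sum.inl a, inl_mem_ovSurvivors a⟩ ⟨Sum.inr (Sum.inr ()), inr_inr_mem_ovSurvivors ()⟩ := by
  refine not_reachable_of_neighborSet_left_eq_empty (by simp) ?_
  ext ⟨p, hp⟩
  simp only [mem_neighborSet, comap_adj, Function.Embedding.subtype_apply, ovGraph_adj_inl,
    Set.mem_empty_iff_false, iff_false, not_exists, not_and]
  rintro i hai rfl
  simp [inr_inl_mem_ovSurvivors_iff, hab i hai] at hp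

theorem ovGraph_induce_reachable_center
    (h : ∀ a ∈ A, ∃ i, a i = true ∧ b i = true) (p : ovSurvivors A b) :
    ((ovGraph f A).induce (ovSurvivors A b)).Reachable
      p ⟨Sum.inr (Sum.inr ()), inr_inr_mem_ovSurvivors ()⟩ := by
  have reach_of_y : ∀ i (hi : Sum.inr (Sum.inl i) ∈ ovSurvivors A b),
      ((ovGraph f A).induce (ovSurvivors A b)).Reachable ⟨_, hi⟩
        ⟨Sum.inr (Sum.inr ()), inr_inr_mem_ovSurvivors ()⟩ :=
    fun _ _ => Adj.reachable trivial
  obtain ⟨(a | i | ⟨⟩), hp⟩ := p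
  · obtain ⟨i, hai, hbi⟩ := h a a.2
    have hi : Sum.inr (Sum.inl i) ∈ ovSurvivors A b := inr_inl_mem_ovSurvivors_iff.mpr hbi
    have hxy : ((ovGraph f A).induce (ovSurvivors A b)).Adj ⟨_, hp⟩ ⟨_, hi⟩ := hai
    exact hxy.reachable.trans (reach_of_y i hi)
  · exact reach_of_y i hp
  · rfl

end

theorem stmt12_general (f : ℕ) (A : Set (Fin f → Bool))
    (b : Fin f → Bool) :
    (∃ a ∈ A, ∀ i, a i = true → b i = false) ↔
      ¬ ((ovGraph f A).induce
          {p : ↥A ⊕ (Fin f ⊕ Unit) | ∃ i, b i = false ∧ p = Sum.inr (Sum.inl i)}ᶜ).Connected := by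
  show _ ↔ ¬ ((ovGraph f A).induce (ovSurvivors A b)).Connected
  constructor
  · rintro ⟨a, ha, hab⟩ hconn
    exact ovGraph_induce_not_reachable_of_orthogonal (a := ⟨a, ha⟩) hab (hconn.preconnected _ _)
  · intro hdisconn
    by_contra! hno
    simp only [ne_eq, Bool.not_eq_false] at hno
    exact hdisconn ((connected_iff_exists_forall_reachable _).mpr
      ⟨_, fun p => (ovGraph_induce_reachable_center hno p).symm⟩)

/-- There is `a ∈ A` orthogonal to `b` iff deleting `F_b = {y_i : b i = 0}` disconnects
the OV graph. -/
theorem stmt12 (f : ℕ) (hf : 1 ≤ f) (A : Set (Fin f → Bool)) (hA : A.Nonempty)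
    (b : Fin f → Bool) (hb : ∃ i, b i = true) :
    (∃ a ∈ A, ∀ i, a i = true → b i = false) ↔
      ¬ ((ovGraph f A).induce
          {p : ↥A ⊕ (Fin f ⊕ Unit) | ∃ i, b i = false ∧ p = Sum.inr (Sum.inl i)}ᶜ).Connected :=
  stmt12_general f A b
end

section
/- Let G be a graph with terminal set T, vertex T-cut (L,S,R), and f-right graph G_R with representative sets U_L ⊆ L ∩ (T first), U_R ⊆ R. Let U_S be a set of min(f+1, |T ∩ S|) terminals in T ∩ S. Let F ⊆ V(G_R) with |F| ≤ f. If in G_R, F separates T ∩ V(G_R) but separates neither S nor T ∩ R, then F separates U_L ∪ U_R ∪ U_S in G_R. -/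
/-!
A terminal of `G_R` outside `F` lies in `U_L`, in `R` or in `S`. In the last two cases the
representatives (`U_R ⊆ T` unless `T ∩ R ⊆ U_R`, resp. `U_S`) are not all in `F`: otherwise they
would number at most `f`, hence be all of `R`, resp. `T ∩ S`, which contains the terminal.
As `F` separates neither `T ∩ R` nor `S`, the terminal is joined in `G_R - F` to a representative,
so the two terminals separated by `F` can be replaced by representatives.
-/

open SimpleGraph

namespace SimpleGraph

variable {α : Type*} {G : SimpleGraph α} {F X Y : Set α}

theorem reachable_of_not_sepSet (h : ¬ G.SepSet F X) {s t : ↥Fᶜ} (hs : (s : α) ∈ X)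
    (ht : (t : α) ∈ X) : (G.induce Fᶜ).Reachable s t :=
  not_not.mp fun hst => h ⟨s, t, hs, ht, hst⟩

theorem SepSet.of_forall_reachable (hX : G.SepSet F X)
    (hXY : ∀ x : ↥Fᶜ, (x : α) ∈ X → ∃ y : ↥Fᶜ, (y : α) ∈ Y ∧ (G.induce Fᶜ).Reachable x y) :
    G.SepSet F Y := by
  obtain ⟨s, t, hs, ht, hst⟩ := hX
  obtain ⟨s', hs', hss'⟩ := hXY s hs
  obtain ⟨t', ht', htt'⟩ := hXY t ht
  exact ⟨s', t', hs', ht', fun h => hst ((hss'.trans h).trans htt'.symm)⟩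

end SimpleGraph

theorem exists_mem_notMem_of_ncard_eq_min {α : Type*} {A U F : Set α} {f : ℕ} {a : α}
    (hA : A.Finite) (hF : F.Finite) (hUA : U ⊆ A) (hU : U.ncard = min (f + 1) A.ncard)
    (hFf : F.ncard ≤ f) (ha : a ∈ A) (haF : a ∉ F) : ∃ u ∈ U, u ∉ F := by
  by_contra! hUF
  have hUf : U.ncard ≤ f := (Set.ncard_le_ncard hUF hF).trans hFf
  have hUA_eq : U = A := Set.eq_of_subset_of_ncard_le hUA (by omega) hA
  exact haF (hUF a (hUA_eq ▸ ha))

theorem exists_reachable_representative {V : Type*} [Finite V] {T S R UL UR US F : Set V}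
    {f : ℕ} {H : SimpleGraph ↥(R ∪ S ∪ UL)}
    (hURsub : UR ⊆ R) (hURcard : UR.ncard = min (f + 1) R.ncard) (hURfirst : T ∩ R ⊆ UR ∨ UR ⊆ T)
    (hUSsub : US ⊆ T ∩ S) (hUScard : US.ncard = min (f + 1) (T ∩ S).ncard) (hFcard : F.ncard ≤ f)
    (hnsepS : ¬ H.SepSet {a | (a : V) ∈ F} {a | (a : V) ∈ S})
    (hnsepTR : ¬ H.SepSet {a | (a : V) ∈ F} {a | (a : V) ∈ T ∩ R})
    (x : ↥{a : ↥(R ∪ S ∪ UL) | (a : V) ∈ F}ᶜ) (hxT : ((x : ↥(R ∪ S ∪ UL)) : V) ∈ T) :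
    ∃ y : ↥{a : ↥(R ∪ S ∪ UL) | (a : V) ∈ F}ᶜ, ((y : ↥(R ∪ S ∪ UL)) : V) ∈ UL ∪ UR ∪ US ∧
      (H.induce {a : ↥(R ∪ S ∪ UL) | (a : V) ∈ F}ᶜ).Reachable x y := by
  have hxF : ((x : ↥(R ∪ S ∪ UL)) : V) ∉ F := x.2
  rcases (x : ↥(R ∪ S ∪ UL)).2 with (hxR | hxS) | hxUL
  · rcases hURfirst with hTR | hURT
    · exact ⟨x, Or.inl (Or.inr (hTR ⟨hxT, hxR⟩)), .refl x⟩
    · obtain ⟨u, huUR, huF⟩ := exists_mem_notMem_of_ncard_eq_min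
        (Set.toFinite R) (Set.toFinite F) hURsub hURcard hFcard hxR hxF
      let y : ↥{a : ↥(R ∪ S ∪ UL) | (a : V) ∈ F}ᶜ := ⟨⟨u, .inl (.inl (hURsub huUR))⟩, huF⟩
      exact ⟨y, .inl (.inr huUR),
        reachable_of_not_sepSet hnsepTR (s := x) (t := y) ⟨hxT, hxR⟩ ⟨hURT huUR, hURsub huUR⟩⟩
  · obtain ⟨u, huUS, huF⟩ := exists_mem_notMem_of_ncard_eq_min
      (Set.toFinite _) (Set.toFinite F) hUSsub hUScard hFcard ⟨hxT, hxS⟩ hxF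
    let y : ↥{a : ↥(R ∪ S ∪ UL) | (a : V) ∈ F}ᶜ := ⟨⟨u, .inl (.inr (hUSsub huUS).2)⟩, huF⟩
    exact ⟨y, .inr huUS, reachable_of_not_sepSet hnsepS (s := x) (t := y) hxS (hUSsub huUS).2⟩
  · exact ⟨x, .inl (.inl hxUL), .refl x⟩

theorem stmt14_general {V : Type*} [Fintype V] (G : SimpleGraph V) (f : ℕ)
    (T S R : Set V)
    (UL : Set V)
    (UR : Set V) (hURsub : UR ⊆ R) (hURcard : UR.ncard = min (f + 1) R.ncard)
    (hURfirst : T ∩ R ⊆ UR ∨ UR ⊆ T)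
    (US : Set V) (hUSsub : US ⊆ T ∩ S) (hUScard : US.ncard = min (f + 1) (T ∩ S).ncard)
    (F : Set V) (hFcard : F.ncard ≤ f)
    (hsepT : (leftGraph G S UL (R ∪ S ∪ UL)).SepSet
        {a : ↥(R ∪ S ∪ UL) | (a : V) ∈ F} {a : ↥(R ∪ S ∪ UL) | (a : V) ∈ T})
    (hnsepS : ¬ (leftGraph G S UL (R ∪ S ∪ UL)).SepSet
        {a : ↥(R ∪ S ∪ UL) | (a : V) ∈ F} {a : ↥(R ∪ S ∪ UL) | (a : V) ∈ S})
    (hnsepTR : ¬ (leftGraph G S UL (R ∪ S ∪ UL)).SepSet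
        {a : ↥(R ∪ S ∪ UL) | (a : V) ∈ F} {a : ↥(R ∪ S ∪ UL) | (a : V) ∈ T ∩ R}) :
    (leftGraph G S UL (R ∪ S ∪ UL)).SepSet
        {a : ↥(R ∪ S ∪ UL) | (a : V) ∈ F} {a : ↥(R ∪ S ∪ UL) | (a : V) ∈ UL ∪ UR ∪ US} :=
  hsepT.of_forall_reachable fun x hxT =>
    exists_reachable_representative hURsub hURcard hURfirst hUSsub hUScard hFcard
      hnsepS hnsepTR x hxT

/-- Stepchild lemma: if `F ⊆ V(G_R)` with `|F| ≤ f` separates `T ∩ V(G_R)` in the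
`f`-right graph `G_R`, but separates neither `S` nor `T ∩ R` there, then `F` separates
`U_L ∪ U_R ∪ U_S` in `G_R`. -/
theorem stmt14 {V : Type*} [Fintype V] (G : SimpleGraph V) (f : ℕ) (hf : 1 ≤ f)
    (T L S R : Set V) (hLne : L.Nonempty) (hRne : R.Nonempty)
    (hUnion : L ∪ S ∪ R = Set.univ) (hLS : Disjoint L S) (hLR : Disjoint L R)
    (hSR : Disjoint S R)
    (hnoedge : ∀ a ∈ L, ∀ b ∈ R, ¬ G.Adj a b)
    (UL : Set V) (hULsub : UL ⊆ L) (hULcard : UL.ncard = min (f + 1) L.ncard)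
    (hULfirst : T ∩ L ⊆ UL ∨ UL ⊆ T)
    (UR : Set V) (hURsub : UR ⊆ R) (hURcard : UR.ncard = min (f + 1) R.ncard)
    (hURfirst : T ∩ R ⊆ UR ∨ UR ⊆ T)
    (US : Set V) (hUSsub : US ⊆ T ∩ S) (hUScard : US.ncard = min (f + 1) (T ∩ S).ncard)
    (F : Set V) (hFsub : F ⊆ R ∪ S ∪ UL) (hFcard : F.ncard ≤ f)
    (hsepT : (leftGraph G S UL (R ∪ S ∪ UL)).SepSet
        {a : ↥(R ∪ S ∪ UL) | (a : V) ∈ F} {a : ↥(R ∪ S ∪ UL) | (a : V) ∈ T})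
    (hnsepS : ¬ (leftGraph G S UL (R ∪ S ∪ UL)).SepSet
        {a : ↥(R ∪ S ∪ UL) | (a : V) ∈ F} {a : ↥(R ∪ S ∪ UL) | (a : V) ∈ S})
    (hnsepTR : ¬ (leftGraph G S UL (R ∪ S ∪ UL)).SepSet
        {a : ↥(R ∪ S ∪ UL) | (a : V) ∈ F} {a : ↥(R ∪ S ∪ UL) | (a : V) ∈ T ∩ R}) :
    (leftGraph G S UL (R ∪ S ∪ UL)).SepSet
        {a : ↥(R ∪ S ∪ UL) | (a : V) ∈ F} {a : ↥(R ∪ S ∪ UL) | (a : V) ∈ UL ∪ UR ∪ US} :=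
  stmt14_general G f T S R UL UR hURsub hURcard hURfirst US hUSsub hUScard F hFcard hsepT hnsepS
    hnsepTR
end

section
/- Let G be an undirected graph, T ⊆ V a terminal set, and let F ⊆ V separate T in G. Let τ be a Steiner tree for T in G (a subtree of G containing all terminals of T). Then there exist two distinct vertices u, u' ∉ F, both neighbors in τ of vertices of F, such that u and u' lie in different connected components of G − F. -/
open SimpleGraph

/-!
Walk along `τ` from `s` to `t` and track the last vertex `a ∉ F` seen so far that is still
separated from `t` in `G - F`. A step from `a` to a vertex `y ∉ F` keeps `a` connected to `y`,
so `y` takes over. A step out of `F` onto `y ∉ F` either does the same or, when `y` is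
separated from `a`, produces the pair `a, y`, both of which were entered or left through `F`.
-/

namespace SimpleGraph

variable {V : Type*} {G τ : SimpleGraph V} {F : Set V} {a b y : V}

def AdjToSet (G : SimpleGraph V) (F : Set V) (u : V) : Prop := ∃ x ∈ F, G.Adj u x

theorem SepPair.ne (h : G.SepPair F a b) : a ≠ b := by
  rintro rfl
  obtain ⟨_, _, hr⟩ := h
  exact hr (Reachable.refl _)

theorem not_sepPair_of_adj (ha : a ∉ F) (hy : y ∉ F) (hadj : G.Adj a y) : ¬ G.SepPair F a y :=
  fun ⟨_, _, hr⟩ => hr (Adj.reachable (G := G.induce Fᶜ) (u := ⟨a, ha⟩) (v := ⟨y, hy⟩) hadj)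

theorem SepPair.left_or_right (h : G.SepPair F a b) (hy : y ∉ F) :
    G.SepPair F a y ∨ G.SepPair F y b := by
  obtain ⟨ha, hb, hr⟩ := h
  by_contra! ⟨hay, hyb⟩
  simp only [SepPair, not_exists, not_not] at hay hyb
  exact hr ((hay ha hy).trans (hyb hy hb))

theorem exists_sepPair_adjToSet_of_walk (hτG : τ ≤ G) {x : V} (p : τ.Walk x b) :
    ∀ a, G.SepPair F a b → (x = a ∨ x ∈ F ∧ τ.AdjToSet F a) →
      ∃ u u', τ.AdjToSet F u ∧ τ.AdjToSet F u' ∧ G.SepPair F u u' := by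
  induction p with
  | nil =>
    rintro a hab (rfl | ⟨hx, -⟩)
    · exact absurd rfl hab.ne
    · exact absurd hx hab.2.1
  | @cons x y b hxy p ih =>
    rintro a hab hxa
    by_cases hyF : y ∈ F
    · refine ih a hab (Or.inr ⟨hyF, ?_⟩)
      rcases hxa with rfl | ⟨-, haF⟩
      exacts [⟨y, hyF, hxy⟩, haF]
    rcases hab.left_or_right hyF with hay | hyb
    · rcases hxa with rfl | ⟨hxF, haF⟩
      · exact absurd hay (not_sepPair_of_adj hab.1 hyF (hτG hxy))
      · exact ⟨a, y, haF, ⟨x, hxF, hxy.symm⟩, hay⟩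
    · exact ih y hyb (Or.inl rfl)

end SimpleGraph

theorem stmt16_general {V : Type*} (G τ : SimpleGraph V) (hτG : τ ≤ G)
    (Vτ : Set V)
    (hτconn : ∀ a ∈ Vτ, ∀ b ∈ Vτ, τ.Reachable a b)
    (T : Set V) (hT : T ⊆ Vτ)
    (F : Set V) (hsep : G.SepSet F T) :
    ∃ u u' : V, u ≠ u' ∧ (∃ x ∈ F, τ.Adj u x) ∧ (∃ x' ∈ F, τ.Adj u' x') ∧
      G.SepPair F u u' := by
  obtain ⟨⟨s, hs⟩, ⟨t, ht⟩, hsT, htT, hst⟩ := hsep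
  obtain ⟨p⟩ := hτconn s (hT hsT) t (hT htT)
  obtain ⟨u, u', hu, hu', huu'⟩ :=
    exists_sepPair_adjToSet_of_walk hτG p s ⟨hs, ht, hst⟩ (Or.inl rfl)
  exact ⟨u, u', huu'.ne, hu, hu', huu'⟩

/-- If `τ` is a Steiner tree for `T` in `G` (an acyclic subgraph of `G`, with vertex set
`Vτ ⊇ T`, connected on `Vτ`) and `F` separates `T` in `G`, then there are two distinct
non-faulty `τ`-neighbors `u, u'` of `F` lying in distinct components of `G - F`. -/
theorem stmt16 {V : Type*} [Fintype V] (G τ : SimpleGraph V) (hτG : τ ≤ G)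
    (hacyc : τ.IsAcyclic)
    (Vτ : Set V) (hedges : ∀ a b, τ.Adj a b → a ∈ Vτ ∧ b ∈ Vτ)
    (hτconn : ∀ a ∈ Vτ, ∀ b ∈ Vτ, τ.Reachable a b)
    (T : Set V) (hT : T ⊆ Vτ)
    (F : Set V) (hsep : G.SepSet F T) :
    ∃ u u' : V, u ≠ u' ∧ (∃ x ∈ F, τ.Adj u x) ∧ (∃ x' ∈ F, τ.Adj u' x') ∧
      G.SepPair F u u' :=
  stmt16_general G τ hτG Vτ hτconn T hT F hsep
end
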